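/- Let L be a complete lattice with J ⊆ L completely join-generating and M ⊆ L completely meet-generating, let ◇ : L → L be completely join-preserving and □ : L → L completely meet-preserving with left adjoint ◆ (i.e., ◆ u ≤ v ↔ u ≤ □ v). Then (∀ a ∈ L, □ a ≤ ◇ a) if and only if (∀ j ∈ J, ∀ m ∈ M, ◇ (◆ j) ≤ m → j ≤ m). -/

import Mathlib

/-!
Using the adjunction, `□ ≤ ◇` is equivalent to `id ≤ ◇ ∘ ◆`: one direction composes with the
unit `u ≤ □ ◆ u`, the other with the counit `◆ □ a ≤ a` and monotonicity of `◇`. The inequality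
`u ≤ ◇ ◆ u` then only needs to be checked against the meet-generators above `◇ ◆ u`, and, since
`◇ ∘ ◆` is monotone, only for join-generators `u`.
-/

theorem monotone_of_map_sSup {α β : Type*} [CompleteLattice α] [CompleteLattice β] {f : α → β}
    (hf : ∀ S : Set α, f (sSup S) = sSup (f '' S)) : Monotone f := by
  intro u v huv
  calc f u ≤ sSup (f '' {u, v}) := le_sSup ⟨u, by simp⟩
    _ = f v := by rw [← hf, sSup_pair, sup_of_le_right huv]

section Generators

variable {L : Type*} [CompleteLattice L]

theorem le_iff_forall_meetGenerator {M : Set L} (hM : ∀ u : L, u = sInf {m ∈ M | u ≤ m})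
    {u v : L} : u ≤ v ↔ ∀ m ∈ M, v ≤ m → u ≤ m := by
  refine ⟨fun huv m _ hvm => huv.trans hvm, fun h => ?_⟩
  rw [hM v]
  exact le_sInf fun m ⟨hmM, hvm⟩ => h m hmM hvm

theorem forall_le_iff_forall_joinGenerator {J : Set L} (hJ : ∀ u : L, u = sSup {j ∈ J | j ≤ u})
    {f : L → L} (hf : Monotone f) : (∀ u, u ≤ f u) ↔ ∀ j ∈ J, j ≤ f j := by
  refine ⟨fun h j _ => h j, fun h u => ?_⟩
  calc u = sSup {j ∈ J | j ≤ u} := hJ u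
    _ ≤ f u := sSup_le fun j ⟨hjJ, hju⟩ => (h j hjJ).trans (hf hju)

end Generators

theorem GaloisConnection.forall_u_le_iff_forall_le_comp_l {L : Type*} [CompleteLattice L]
    {l u d : L → L} (gc : GaloisConnection l u) (hd : Monotone d) :
    (∀ a, u a ≤ d a) ↔ ∀ a, a ≤ d (l a) :=
  ⟨fun h a => (gc.le_u_l a).trans (h (l a)),
    fun h a => (h (u a)).trans (hd (gc.l_u_le a))⟩

theorem alba_correspondence_axiom_D_general
    {L : Type*} [CompleteLattice L] (J M : Set L)
    (hJ : ∀ u : L, u = sSup {j ∈ J | j ≤ u})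
    (hM : ∀ u : L, u = sInf {m ∈ M | u ≤ m})
    (d b bd : L → L)
    (hd : ∀ S : Set L, d (sSup S) = sSup (d '' S))
    (hadj : ∀ u v : L, bd u ≤ v ↔ u ≤ b v) :
    (∀ a : L, b a ≤ d a) ↔ (∀ j ∈ J, ∀ m ∈ M, d (bd j) ≤ m → j ≤ m) := by
  have gc : GaloisConnection bd b := hadj
  have hd_mono : Monotone d := monotone_of_map_sSup hd
  calc (∀ a, b a ≤ d a) ↔ ∀ u, u ≤ d (bd u) := gc.forall_u_le_iff_forall_le_comp_l hd_mono
    _ ↔ ∀ j ∈ J, j ≤ d (bd j) :=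
      forall_le_iff_forall_joinGenerator hJ (f := d ∘ bd) (hd_mono.comp gc.monotone_l)
    _ ↔ ∀ j ∈ J, ∀ m ∈ M, d (bd j) ≤ m → j ≤ m :=
      forall₂_congr fun _ _ => le_iff_forall_meetGenerator hM

theorem alba_correspondence_axiom_D
    {L : Type*} [CompleteLattice L] (J M : Set L)
    (hJ : ∀ u : L, u = sSup {j ∈ J | j ≤ u})
    (hM : ∀ u : L, u = sInf {m ∈ M | u ≤ m})
    (d b bd : L → L)
    (hd : ∀ S : Set L, d (sSup S) = sSup (d '' S))
    (hb : ∀ S : Set L, b (sInf S) = sInf (b '' S))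
    (hadj : ∀ u v : L, bd u ≤ v ↔ u ≤ b v) :
    (∀ a : L, b a ≤ d a) ↔ (∀ j ∈ J, ∀ m ∈ M, d (bd j) ≤ m → j ≤ m) :=
  alba_correspondence_axiom_D_general J M hJ hM d b bd hd hadj
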